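/- arXiv:2101.12034 — 2 statements merged into one kernel-verified Lean document; each statement's English description precedes it below -/
import Mathlib

section
/- Let E₁ and E₂ be symmetric positive definite k×k real matrices, let √(E₁E₂) denote the principal square root of E₁E₂, and let R be the 2k×2k block matrix with diagonal blocks E₁, E₂, off-diagonal blocks r√(E₁E₂) and r(√(E₁E₂))ᵀ for a real scalar r. Then the Schur complement of the E₂ block satisfies R/E₂ = E₁ - r²(√(E₁E₂))E₂⁻¹(√(E₁E₂))ᵀ = (1 - r²)E₁. -/
/-!
With `s = E₁^{1/2}` and `M = (s E₂ s)^{1/2}`, both symmetric, the principal root is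
`P = s M s⁻¹`, so `P E₂⁻¹ Pᵀ = s M (s E₂ s)⁻¹ M s = s M M⁻¹ M⁻¹ M s = s² = E₁`.
Hence the Schur complement `E₁ - r² P E₂⁻¹ Pᵀ` is `(1 - r²) E₁`.
-/

open Matrix

open scoped ComplexOrder in
/-- The positive semidefinite square root of a positive semidefinite matrix
(the definition Mathlib had before it was removed). -/
noncomputable def Matrix.PosSemidef.sqrt {n 𝕜 : Type*} [Fintype n] [RCLike 𝕜] [DecidableEq n]
    {A : Matrix n n 𝕜} (hA : A.PosSemidef) : Matrix n n 𝕜 :=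
  (hA.1.eigenvectorUnitary : Matrix n n 𝕜) *
    diagonal ((fun x : ℝ => (x : 𝕜)) ∘ (√·) ∘ hA.1.eigenvalues) *
    (star hA.1.eigenvectorUnitary : Matrix n n 𝕜)

/-- The principal square root of `E₁ * E₂` for positive definite `E₁, E₂`:
`E₁^{1/2} · (E₁^{1/2} E₂ E₁^{1/2})^{1/2} · E₁^{-1/2}`. -/
noncomputable def principalSqrtMul {k : ℕ} {E₁ E₂ : Matrix (Fin k) (Fin k) ℝ}
    (h₁ : E₁.PosDef) (h₂ : E₂.PosDef) : Matrix (Fin k) (Fin k) ℝ :=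
  h₁.posSemidef.sqrt *
    (h₂.posSemidef.mul_mul_conjTranspose_same h₁.posSemidef.sqrt).sqrt *
    h₁.posSemidef.sqrt⁻¹

namespace Matrix.PosSemidef

open scoped ComplexOrder

variable {n 𝕜 : Type*} [Fintype n] [RCLike 𝕜] [DecidableEq n] {A : Matrix n n 𝕜}

lemma sqrt_eq_conjStarAlgAut (hA : A.PosSemidef) :
    hA.sqrt = Unitary.conjStarAlgAut 𝕜 _ hA.1.eigenvectorUnitary
      (diagonal ((fun x : ℝ => (x : 𝕜)) ∘ (√·) ∘ hA.1.eigenvalues)) :=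
  rfl

lemma posSemidef_sqrt (hA : A.PosSemidef) : hA.sqrt.PosSemidef := by
  have hD : (diagonal ((fun x : ℝ => (x : 𝕜)) ∘ (√·) ∘ hA.1.eigenvalues)).PosSemidef :=
    PosSemidef.diagonal fun i => by simp [Real.sqrt_nonneg]
  simpa [sqrt_eq_conjStarAlgAut, star_eq_conjTranspose, Matrix.mul_assoc] using
    hD.mul_mul_conjTranspose_same (hA.1.eigenvectorUnitary : Matrix n n 𝕜)

lemma sqrt_mul_self (hA : A.PosSemidef) : hA.sqrt * hA.sqrt = A := by
  have hD : diagonal ((fun x : ℝ => (x : 𝕜)) ∘ (√·) ∘ hA.1.eigenvalues) *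
      diagonal ((fun x : ℝ => (x : 𝕜)) ∘ (√·) ∘ hA.1.eigenvalues) =
      diagonal (RCLike.ofReal ∘ hA.1.eigenvalues) := by
    rw [diagonal_mul_diagonal]
    congr 1 with i
    simp [← RCLike.ofReal_mul, Real.mul_self_sqrt (hA.eigenvalues_nonneg i)]
  rw [sqrt_eq_conjStarAlgAut, ← map_mul, hD, ← hA.1.spectral_theorem]

lemma isUnit_sqrt_iff (hA : A.PosSemidef) : IsUnit hA.sqrt ↔ IsUnit A := by
  rw [← isUnit_mul_self_iff, hA.sqrt_mul_self]

lemma transpose_sqrt {B : Matrix n n ℝ} (hB : B.PosSemidef) : hB.sqrtᵀ = hB.sqrt :=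
  (isHermitian_iff_isSymm.mp hB.posSemidef_sqrt.1).eq

end Matrix.PosSemidef

theorem Matrix.conj_mul_inv_mul_transpose_eq_mul_self {n R : Type*} [Fintype n] [DecidableEq n]
    [CommRing R] {s M B : Matrix n n R} (hs : sᵀ = s) (hM : Mᵀ = M) (hMM : M * M = s * B * s)
    (hMu : IsUnit M) :
    s * M * s⁻¹ * B⁻¹ * (s * M * s⁻¹)ᵀ = s * s := by
  have hMd := (isUnit_iff_isUnit_det M).mp hMu
  have hB : s⁻¹ * B⁻¹ * s⁻¹ = M⁻¹ * M⁻¹ := by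
    rw [← Matrix.mul_inv_rev, ← Matrix.mul_inv_rev, ← Matrix.mul_assoc, ← hMM, Matrix.mul_inv_rev]
  calc s * M * s⁻¹ * B⁻¹ * (s * M * s⁻¹)ᵀ
      = s * (M * (s⁻¹ * B⁻¹ * s⁻¹) * M) * s := by
        simp only [transpose_mul, transpose_nonsing_inv, hs, hM, Matrix.mul_assoc]
    _ = s * s := by
        rw [hB, Matrix.mul_assoc, mul_nonsing_inv_cancel_left _ _ hMd, nonsing_inv_mul _ hMd,
          Matrix.one_mul]

theorem principalSqrtMul_mul_inv_mul_transpose {k : ℕ} {E₁ E₂ : Matrix (Fin k) (Fin k) ℝ}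
    (h₁ : E₁.PosDef) (h₂ : E₂.PosDef) :
    principalSqrtMul h₁ h₂ * E₂⁻¹ * (principalSqrtMul h₁ h₂)ᵀ = E₁ := by
  set s := h₁.posSemidef.sqrt
  have hC := h₂.posSemidef.mul_mul_conjTranspose_same s
  have hs : sᵀ = s := h₁.posSemidef.transpose_sqrt
  have hMM : hC.sqrt * hC.sqrt = s * E₂ * s := by
    rw [hC.sqrt_mul_self, conjTranspose_eq_transpose_of_trivial, hs]
  have hsu : IsUnit s := h₁.posSemidef.isUnit_sqrt_iff.mpr h₁.isUnit
  have hMu : IsUnit hC.sqrt := hC.isUnit_sqrt_iff.mpr <| by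
    rw [conjTranspose_eq_transpose_of_trivial, hs]
    exact (hsu.mul h₂.isUnit).mul hsu
  calc principalSqrtMul h₁ h₂ * E₂⁻¹ * (principalSqrtMul h₁ h₂)ᵀ
      = s * s := conj_mul_inv_mul_transpose_eq_mul_self hs hC.transpose_sqrt hMM hMu
    _ = E₁ := h₁.posSemidef.sqrt_mul_self

/-- The Schur complement of the E₂ block of
`R = [[E₁, r√(E₁E₂)], [r(√(E₁E₂))ᵀ, E₂]]` equals
`E₁ - r²√(E₁E₂)E₂⁻¹(√(E₁E₂))ᵀ = (1 - r²)E₁`. -/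
theorem schur_complement_of_pairwise_block (k : ℕ) (E₁ E₂ : Matrix (Fin k) (Fin k) ℝ)
    (h₁ : E₁.PosDef) (h₂ : E₂.PosDef) (r : ℝ) :
    E₁ - (r • principalSqrtMul h₁ h₂) * E₂⁻¹ * (r • principalSqrtMul h₁ h₂)ᵀ
      = E₁ - r ^ 2 • (principalSqrtMul h₁ h₂ * E₂⁻¹ * (principalSqrtMul h₁ h₂)ᵀ) ∧
    E₁ - (r • principalSqrtMul h₁ h₂) * E₂⁻¹ * (r • principalSqrtMul h₁ h₂)ᵀ
      = (1 - r ^ 2) • E₁ := by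
  have hscale : (r • principalSqrtMul h₁ h₂) * E₂⁻¹ * (r • principalSqrtMul h₁ h₂)ᵀ
      = r ^ 2 • (principalSqrtMul h₁ h₂ * E₂⁻¹ * (principalSqrtMul h₁ h₂)ᵀ) := by
    rw [transpose_smul, smul_mul_assoc, smul_mul_assoc, mul_smul_comm, smul_smul, ← sq]
  rw [hscale, principalSqrtMul_mul_inv_mul_transpose, sub_smul, one_smul]
  exact ⟨rfl, rfl⟩
end

section
/- Let σ₁, σ₂ > 0 with σ₁ ≤ σ₂, S = 1/σ₁² + 1/σ₂², Z = 2/(σ₁σ₂). Then on the interval 0 ≤ r < 1, the function g(r) = (S - rZ)/(1 - r²) attains its unique minimum at r = σ₁/σ₂, i.e., the scalar combined variance P(r) = (1-r²)/(S - rZ) is maximized at r_max = min(σ₁/σ₂, σ₂/σ₁). -/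
/-!
Completing the square gives `σ₁² (S - rZ) = (1 - r²) + (r - σ₁/σ₂)²`, so
`g(r) = σ₁⁻² + (r - σ₁/σ₂)² / (σ₁² (1 - r²))` on `r² < 1`: it exceeds `σ₁⁻²` except at
`r = σ₁/σ₂`, where it equals `σ₁⁻²` when `σ₁ < σ₂`, and `P = 1/g` stays below `σ₁² = min(σ₁², σ₂²)`.
-/

/-- The function `g(r) = 1 / P(r)` of the statement. -/
noncomputable def combinedPrecision (σ₁ σ₂ r : ℝ) : ℝ :=
  ((1 / σ₁ ^ 2 + 1 / σ₂ ^ 2) - r * (2 / (σ₁ * σ₂))) / (1 - r ^ 2)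

theorem sq_mul_precision_numerator_eq {K : Type*} [Field K] {a b : K} (ha : a ≠ 0)
    (hb : b ≠ 0) (r : K) :
    a ^ 2 * ((1 / a ^ 2 + 1 / b ^ 2) - r * (2 / (a * b))) = (1 - r ^ 2) + (r - a / b) ^ 2 := by
  field_simp
  ring

theorem combinedPrecision_eq {a b : ℝ} (ha : a ≠ 0) (hb : b ≠ 0) (r : ℝ) :
    combinedPrecision a b r = ((1 - r ^ 2) + (r - a / b) ^ 2) / a ^ 2 / (1 - r ^ 2) := by
  rw [combinedPrecision, ← sq_mul_precision_numerator_eq ha hb,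
    mul_div_cancel_left₀ _ (pow_ne_zero 2 ha)]

/-- At `a = b` the point `r = a / b = 1` is a pole and the value is the junk `0`, which is
still below `1 / a ^ 2`. -/
theorem combinedPrecision_div_le {a b : ℝ} (ha : a ≠ 0) (hb : b ≠ 0) :
    combinedPrecision a b (a / b) ≤ 1 / a ^ 2 := by
  rw [combinedPrecision_eq ha hb, sub_self, zero_pow two_ne_zero, add_zero, div_right_comm]
  exact div_le_div_of_nonneg_right (div_self_le_one _) (sq_nonneg a)

theorem inv_sq_lt_combinedPrecision {a b r : ℝ} (ha : a ≠ 0) (hb : b ≠ 0) (hr : r ^ 2 < 1)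
    (hne : r ≠ a / b) : 1 / a ^ 2 < combinedPrecision a b r := by
  have hpos : 0 < 1 - r ^ 2 := sub_pos.mpr hr
  have hsq : 0 < (r - a / b) ^ 2 := by
    have := sub_ne_zero.mpr hne
    positivity
  rw [combinedPrecision_eq ha hb, lt_div_iff₀ hpos, div_mul_eq_mul_div, one_mul]
  exact div_lt_div_of_pos_right (by linarith) (by positivity)

/-- For σ₁ ≤ σ₂, on `0 ≤ r < 1` the function `g(r) = (S - rZ)/(1-r²)` with
`S = 1/σ₁² + 1/σ₂²`, `Z = 2/(σ₁σ₂)` has a unique minimum at `r = σ₁/σ₂`;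
equivalently the combined variance `P(r) = (1-r²)/(S - rZ)` is maximized at
`r_max = min(σ₁/σ₂, σ₂/σ₁)`, with maximal value `min(σ₁², σ₂²)`. -/
theorem scalar_variance_max (σ₁ σ₂ : ℝ) (h₁ : 0 < σ₁) (h₂ : 0 < σ₂) (hle : σ₁ ≤ σ₂) :
    ∀ r : ℝ, 0 ≤ r → r < 1 → r ≠ σ₁ / σ₂ →
      ((1 / σ₁ ^ 2 + 1 / σ₂ ^ 2) - (σ₁ / σ₂) * (2 / (σ₁ * σ₂))) / (1 - (σ₁ / σ₂) ^ 2)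
        < ((1 / σ₁ ^ 2 + 1 / σ₂ ^ 2) - r * (2 / (σ₁ * σ₂))) / (1 - r ^ 2) ∧
      (1 - r ^ 2) / ((1 / σ₁ ^ 2 + 1 / σ₂ ^ 2) - r * (2 / (σ₁ * σ₂)))
        < min (σ₁ ^ 2) (σ₂ ^ 2) := by
  intro r hr0 hr1 hne
  have hr : r ^ 2 < 1 := by nlinarith
  have hlt := inv_sq_lt_combinedPrecision h₁.ne' h₂.ne' hr hne
  refine ⟨(combinedPrecision_div_le h₁.ne' h₂.ne').trans_lt hlt, ?_⟩
  calc (1 - r ^ 2) / ((1 / σ₁ ^ 2 + 1 / σ₂ ^ 2) - r * (2 / (σ₁ * σ₂)))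
      = (combinedPrecision σ₁ σ₂ r)⁻¹ := (inv_div _ _).symm
    _ < (1 / σ₁ ^ 2)⁻¹ := inv_strictAnti₀ (by positivity) hlt
    _ = min (σ₁ ^ 2) (σ₂ ^ 2) := by
      rw [one_div, inv_inv, min_eq_left (pow_le_pow_left₀ h₁.le hle 2)]
end
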